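/- arXiv:2603.14116 — 3 statements merged into one kernel-verified Lean document; each statement's English description precedes it below -/
import Mathlib

section
/- Let N be a positive integer, let A ⊆ {1,…,N} with |A| = δN where 0 < δ ≤ 1, and let k ≥ 2 be an integer. Then there exists an interval J ⊆ {1,…,N} with |J| ≥ N · exp(−4k · log(4k) · log(1/δ)) which is k-equidistributed with respect to A; that is, J can be partitioned into k consecutive subintervals J₁,…,J_k with |J_i| ≥ ⌊|J|/k⌋ for each i, such that |A ∩ J_i| ≥ δ·|J_i|/2 for every i = 1,…,k. -/
/-!
Density increment: cut the current interval `I`, on which `A` has density `α ≥ δ`, into `k`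
nearly equal pieces. Either every piece has density at least `δ / 2`, or one piece is sparse;
then the remaining pieces together have density at least `α (1 + 1 / (4k))`, and one of them,
of length at least `|I| / (2k)`, inherits it. Densities never exceed `1`, so the iteration
stops, each step trading a factor `2k` of length for a factor `1 + 1 / (4k)` of density; since
`(1 + 1 / (4k)) ^ (4k log 4k) ≥ 2k`, the final interval has length at least `N δ ^ (4k log 4k)`.
-/

open Finset Real

lemma card_inter_Ioc_le (A : Finset ℕ) (a b : ℕ) : #(A ∩ Ioc a b) ≤ b - a :=
  (card_le_card inter_subset_right).trans (Nat.card_Ioc a b).le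

lemma card_inter_Ioc_add_card_inter_Ioc (A : Finset ℕ) {a b c : ℕ} (hab : a ≤ b) (hbc : b ≤ c) :
    #(A ∩ Ioc a b) + #(A ∩ Ioc b c) = #(A ∩ Ioc a c) := by
  rw [← Ioc_union_Ioc_eq_Ioc hab hbc, inter_union_distrib_left, card_union_of_disjoint]
  exact (Ioc_disjoint_Ioc.2 (by omega)).mono inter_subset_right inter_subset_right

lemma sum_card_inter_Ioc (A : Finset ℕ) {e : ℕ → ℕ} (he : Monotone e) (n : ℕ) :
    ∑ i ∈ range n, #(A ∩ Ioc (e i) (e (i + 1))) = #(A ∩ Ioc (e 0) (e n)) := by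
  induction n with
  | zero => simp
  | succ n ih =>
    rw [sum_range_succ, ih, card_inter_Ioc_add_card_inter_Ioc A (he n.zero_le) (he n.le_succ)]

lemma exists_pos_and_mul_lt_of_mul_sum_lt {ι : Type*} {s : Finset ι} {ℓ c : ι → ℕ} {β : ℝ}
    (hc : ∀ i ∈ s, c i ≤ ℓ i) (h : β * ∑ i ∈ s, (ℓ i : ℝ) < ∑ i ∈ s, (c i : ℝ)) :
    ∃ i ∈ s, 0 < ℓ i ∧ β * ℓ i < c i := by
  rw [mul_sum] at h
  obtain ⟨i, hi, hlt⟩ := exists_lt_of_sum_lt h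
  refine ⟨i, hi, Nat.pos_of_ne_zero fun hℓ => ?_, hlt⟩
  have hc0 : c i = 0 := by have := hc i hi; omega
  simp [hℓ, hc0] at hlt

lemma lt_two_mul_mul_of_div_le {m k ℓ : ℕ} (hk : 0 < k) (hℓ : 0 < ℓ) (h : m / k ≤ ℓ) :
    m < 2 * k * ℓ :=
  calc m < k * (m / k + 1) := Nat.lt_mul_div_succ m hk
    _ ≤ k * (ℓ + ℓ) := Nat.mul_le_mul_left k (by omega)
    _ = 2 * k * ℓ := by ring

lemma two_mul_le_one_add_inv_rpow {k : ℝ} (hk : 1 ≤ k) :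
    2 * k ≤ (1 + 1 / (4 * k)) ^ (4 * k * log (4 * k)) := by
  have hlog_one_add : 1 / (4 * k + 1) ≤ log (1 + 1 / (4 * k)) := by
    convert one_sub_inv_le_log_of_pos (x := 1 + 1 / (4 * k)) (by positivity) using 1
    field_simp
    ring
  have hlog_two_mul : log (2 * k) ≤ 4 * k * log 2 := by
    have := log_le_sub_one_of_pos (x := 2 * k) (by positivity)
    have := log_two_gt_d9
    nlinarith
  have hlog_four_mul : log (4 * k) = log 2 + log (2 * k) := by
    rw [← log_mul two_ne_zero (by positivity)]
    ring_nf
  have hexponent : log (2 * k) ≤ log (1 + 1 / (4 * k)) * (4 * k * log (4 * k)) := by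
    have hL : 0 ≤ log (1 + 1 / (4 * k)) := log_nonneg (by simp; positivity)
    have hpos : 0 ≤ log (2 * k) := log_nonneg (by linarith)
    rw [div_le_iff₀ (by linarith)] at hlog_one_add
    rw [hlog_four_mul]
    nlinarith [mul_le_mul_of_nonneg_left hlog_two_mul hL]
  calc 2 * k = exp (log (2 * k)) := (exp_log (by positivity)).symm
    _ ≤ _ := by rw [rpow_def_of_pos (by positivity)]; exact exp_le_exp.2 hexponent

lemma mul_rpow_le_mul_mul_one_add_inv_rpow {k α m ℓ : ℝ} (hk : 1 ≤ k) (hα : 0 ≤ α)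
    (hℓ : 0 ≤ ℓ) (hm : m ≤ 2 * k * ℓ) :
    m * α ^ (4 * k * log (4 * k)) ≤ ℓ * (α * (1 + 1 / (4 * k))) ^ (4 * k * log (4 * k)) := by
  have hgrowth := two_mul_le_one_add_inv_rpow hk
  rw [mul_rpow hα (by positivity)]
  calc m * α ^ (4 * k * log (4 * k)) ≤ 2 * k * ℓ * α ^ (4 * k * log (4 * k)) := by gcongr
    _ = ℓ * (α ^ (4 * k * log (4 * k)) * (2 * k)) := by ring
    _ ≤ ℓ * (α ^ (4 * k * log (4 * k)) * (1 + 1 / (4 * k)) ^ (4 * k * log (4 * k))) := by gcongr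

lemma density_increment_of_sparse_piece {δ α k m ℓ C c : ℝ} (hk : 0 < k) (hα : 0 ≤ α)
    (hδα : δ ≤ α) (hℓ : 0 ≤ ℓ) (hm : m ≤ 2 * k * ℓ) (hC : α * m ≤ C) (hc : c < δ * ℓ / 2) :
    α * (1 + 1 / (4 * k)) * (m - ℓ) < C - c := by
  have hsplit : α * (1 + 1 / (4 * k)) * (m - ℓ) = α * (m - ℓ) + α * (m - ℓ) / (4 * k) := by
    field_simp
  have hgain : α * (m - ℓ) / (4 * k) ≤ α * ℓ / 2 := by
    rw [div_le_iff₀ (by positivity)]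
    nlinarith [mul_le_mul_of_nonneg_left hm hα]
  nlinarith [mul_le_mul_of_nonneg_right hδα hℓ]

def regularPartition (a m k i : ℕ) : ℕ := a + i * m / k

section regularPartition

variable {a m k : ℕ}

@[simp] lemma regularPartition_zero : regularPartition a m k 0 = a := by
  simp [regularPartition]

lemma regularPartition_self (hk : 0 < k) : regularPartition a m k k = a + m := by
  simp [regularPartition, Nat.mul_div_cancel_left m hk]

lemma regularPartition_monotone : Monotone (regularPartition a m k) :=
  fun _ _ hij => Nat.add_le_add_left (Nat.div_le_div_right (Nat.mul_le_mul_right m hij)) a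

lemma div_le_regularPartition_succ_sub (i : ℕ) :
    m / k ≤ regularPartition a m k (i + 1) - regularPartition a m k i := by
  have := Nat.div_add_div_le_add_div (x := i * m) (y := m) (z := k)
  simp only [regularPartition, add_one_mul]
  omega

end regularPartition

def IsEquidistributedPartition (A : Finset ℕ) (δ : ℝ) (k : ℕ) (e : ℕ → ℕ) : Prop :=
  (∀ i < k, e i ≤ e (i + 1)) ∧ ∀ i < k, (e k - e 0) / k ≤ e (i + 1) - e i ∧
    δ * ((e (i + 1) - e i : ℕ) : ℝ) / 2 ≤ (#(A ∩ Ioc (e i) (e (i + 1))) : ℝ)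

section densityIncrement

variable {A : Finset ℕ} {δ α : ℝ} {k : ℕ} {e : ℕ → ℕ}

lemma exists_denser_piece (hδ : 0 < δ) (hk : 0 < k) (he : Monotone e)
    (hlen : ∀ i, (e k - e 0) / k ≤ e (i + 1) - e i) (hδα : δ ≤ α)
    (hdens : α * ((e k - e 0 : ℕ) : ℝ) ≤ #(A ∩ Ioc (e 0) (e k)))
    (hbad : ∃ i < k, (#(A ∩ Ioc (e i) (e (i + 1))) : ℝ) < δ * ((e (i + 1) - e i : ℕ) : ℝ) / 2) :
    ∃ j < k, e (j + 1) - e j < e k - e 0 ∧ e k - e 0 < 2 * k * (e (j + 1) - e j) ∧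
      α * (1 + 1 / (4 * k)) * ((e (j + 1) - e j : ℕ) : ℝ) ≤ #(A ∩ Ioc (e j) (e (j + 1))) := by
  obtain ⟨i₀, hi₀, hsparse⟩ := hbad
  set ℓ : ℕ → ℕ := fun i => e (i + 1) - e i
  set c : ℕ → ℕ := fun i => #(A ∩ Ioc (e i) (e (i + 1)))
  set m := e k - e 0
  have hi₀_mem : i₀ ∈ range k := mem_range.2 hi₀
  have hsum_ℓ : ∑ i ∈ range k, ℓ i = m := sum_range_tsub he k
  have hsum_c : ∑ i ∈ range k, c i = #(A ∩ Ioc (e 0) (e k)) := sum_card_inter_Ioc A he k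
  have hℓ₀ : 0 < ℓ i₀ := by
    have : (0 : ℝ) < δ * ℓ i₀ := by linarith [(Nat.cast_nonneg (c i₀) : (0 : ℝ) ≤ c i₀)]
    exact_mod_cast pos_of_mul_pos_right this hδ.le
  have hm_le : (m : ℝ) ≤ 2 * k * ℓ i₀ := by
    exact_mod_cast (lt_two_mul_mul_of_div_le hk hℓ₀ (hlen i₀)).le
  have hrest : α * (1 + 1 / (4 * k)) * ∑ i ∈ (range k).erase i₀, (ℓ i : ℝ) <
      ∑ i ∈ (range k).erase i₀, (c i : ℝ) := by
    rw [sum_erase_eq_sub hi₀_mem, sum_erase_eq_sub hi₀_mem, ← Nat.cast_sum, ← Nat.cast_sum,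
      hsum_ℓ, hsum_c]
    exact density_increment_of_sparse_piece (by positivity) (hδ.le.trans hδα) hδα
      (Nat.cast_nonneg _) hm_le hdens hsparse
  obtain ⟨j, hj, hℓj, hcj⟩ :=
    exists_pos_and_mul_lt_of_mul_sum_lt (fun i _ => card_inter_Ioc_le A _ _) hrest
  have hℓj_add : ℓ j + ℓ i₀ ≤ m := by
    rw [← hsum_ℓ, ← sum_erase_add _ _ hi₀_mem]
    gcongr
    exact single_le_sum (fun i _ => Nat.zero_le (ℓ i)) hj
  exact ⟨j, mem_range.1 (mem_of_mem_erase hj), show ℓ j < m by omega,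
    lt_two_mul_mul_of_div_le hk hℓj (hlen j), hcj.le⟩

theorem exists_isEquidistributedPartition_of_le_card (hδ : 0 < δ) (hk : 0 < k) (a b : ℕ) (α : ℝ)
    (hab : a ≤ b) (hδα : δ ≤ α) (hdens : α * ((b - a : ℕ) : ℝ) ≤ #(A ∩ Ioc a b)) :
    ∃ e, a ≤ e 0 ∧ e k ≤ b ∧ IsEquidistributedPartition A δ k e ∧
      ((b - a : ℕ) : ℝ) * α ^ (4 * k * log (4 * k)) ≤ ((e k - e 0 : ℕ) : ℝ) := by
  induction hm : b - a using Nat.strong_induction_on generalizing a b α with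
  | _ m ih =>
  rw [hm] at hdens
  set E := regularPartition a m k
  have hE : Monotone E := regularPartition_monotone
  have hE0 : E 0 = a := regularPartition_zero
  have hEk : E k = b := by rw [show E k = a + m from regularPartition_self hk]; omega
  have hEm : E k - E 0 = m := by omega
  have hα : 0 < α := hδ.trans_le hδα
  have hC : 0 ≤ 4 * (k : ℝ) * log (4 * k) :=
    mul_nonneg (by positivity) (log_nonneg (by norm_cast; omega))
  by_cases hgood : ∀ i < k, δ * ((E (i + 1) - E i : ℕ) : ℝ) / 2 ≤ #(A ∩ Ioc (E i) (E (i + 1)))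
  · refine ⟨E, hE0.ge, hEk.le, ⟨fun i _ => hE i.le_succ, fun i hi =>
      ⟨hEm ▸ div_le_regularPartition_succ_sub i, hgood i hi⟩⟩, ?_⟩
    rw [hEm]
    rcases m.eq_zero_or_pos with rfl | hm_pos
    · simp
    have hα_le : α ≤ 1 := by
      refine le_of_mul_le_mul_right ?_ (Nat.cast_pos.2 hm_pos)
      rw [one_mul]
      exact hdens.trans (by rw [← hm]; exact_mod_cast card_inter_Ioc_le A a b)
    exact mul_le_of_le_one_right (Nat.cast_nonneg m) (rpow_le_one hα.le hα_le hC)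
  · push Not at hgood
    obtain ⟨j, hj, hshort, hlong, hdenser⟩ := exists_denser_piece hδ hk hE
      (fun i => hEm ▸ div_le_regularPartition_succ_sub i) hδα (by rwa [hEm, hE0, hEk]) hgood
    have hδα' : δ ≤ α * (1 + 1 / (4 * k)) := hδα.trans (le_mul_of_one_le_right hα.le
      (le_add_of_nonneg_right (by positivity)))
    obtain ⟨e, he0, hek, he, hlen⟩ :=
      ih _ (hEm ▸ hshort) (E j) (E (j + 1)) _ (hE j.le_succ) hδα' hdenser rfl
    refine ⟨e, hE0 ▸ (hE j.zero_le).trans he0, hek.trans (hEk ▸ hE hj), he, le_trans ?_ hlen⟩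
    exact mul_rpow_le_mul_mul_one_add_inv_rpow (Nat.one_le_cast.2 hk) hα.le (Nat.cast_nonneg _)
      (by exact_mod_cast (hEm ▸ hlong).le)

end densityIncrement

theorem exists_equidistributed_interval_general (N : ℕ) (A : Finset ℕ)
    (hA : A ⊆ Finset.Icc 1 N) (δ : ℝ) (hδ0 : 0 < δ)
    (hcard : (A.card : ℝ) = δ * N) (k : ℕ) (hk : 2 ≤ k) :
    ∃ e : ℕ → ℕ, e k ≤ N ∧ (∀ i < k, e i ≤ e (i + 1)) ∧
      (N : ℝ) * Real.exp (-(4 * k) * Real.log (4 * k) * Real.log (1 / δ)) ≤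
        ((e k - e 0 : ℕ) : ℝ) ∧
      ∀ i < k, (e k - e 0) / k ≤ e (i + 1) - e i ∧
        δ * ((e (i + 1) - e i : ℕ) : ℝ) / 2 ≤
          ((A ∩ Finset.Ioc (e i) (e (i + 1))).card : ℝ) := by
  have hA_Ioc : A ∩ Ioc 0 N = A := inter_eq_left.2 fun x hx => by
    have := mem_Icc.1 (hA hx)
    simp only [mem_Ioc]
    omega
  obtain ⟨e, -, hek, ⟨hmono, hpieces⟩, hlen⟩ :=
    exists_isEquidistributedPartition_of_le_card (A := A) hδ0 (by omega : 0 < k) 0 N δ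
      N.zero_le le_rfl (by simp [hA_Ioc, hcard])
  have hexp : exp (-(4 * k) * log (4 * k) * log (1 / δ)) = δ ^ (4 * k * log (4 * k)) := by
    rw [rpow_def_of_pos hδ0, one_div, log_inv]
    ring_nf
  refine ⟨e, hek, hmono, ?_, hpieces⟩
  rw [hexp]
  simpa using hlen

/-- Every set `A ⊆ {1,…,N}` of density `δ` admits a `k`-equidistributed interval
`J` of length at least `N·exp(-4k·log(4k)·log(1/δ))`: `J = Ioc (e 0) (e k)` is
partitioned into the `k` consecutive subintervals `Jᵢ = Ioc (e i) (e (i+1))`,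
each of length at least `⌊|J|/k⌋` and carrying at least half of the expected
number `δ|Jᵢ|` of points of `A`. -/
theorem exists_equidistributed_interval (N : ℕ) (hN : 0 < N) (A : Finset ℕ)
    (hA : A ⊆ Finset.Icc 1 N) (δ : ℝ) (hδ0 : 0 < δ) (hδ1 : δ ≤ 1)
    (hcard : (A.card : ℝ) = δ * N) (k : ℕ) (hk : 2 ≤ k) :
    ∃ e : ℕ → ℕ, e k ≤ N ∧ (∀ i < k, e i ≤ e (i + 1)) ∧
      (N : ℝ) * Real.exp (-(4 * k) * Real.log (4 * k) * Real.log (1 / δ)) ≤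
        ((e k - e 0 : ℕ) : ℝ) ∧
      ∀ i < k, (e k - e 0) / k ≤ e (i + 1) - e i ∧
        δ * ((e (i + 1) - e i : ℕ) : ℝ) / 2 ≤
          ((A ∩ Finset.Ioc (e i) (e (i + 1))).card : ℝ) :=
  exists_equidistributed_interval_general N A hA δ hδ0 hcard k hk
end

section
/- Let q be a positive integer, M ≥ 2 an integer, N ≥ 1 with t = √(q/N), and let C be a real number with 1 ≤ C < t/4. Let u/v = [0;r₁,…,r_l] ∈ Q̄_M(t), and let a₁, a₂ be elements of Z_M(t) with a₁/q, a₂/q ∈ J_{u/v}. Let x₁ ≠ x₂ be denominators of convergents to a₁/q and to a₂/q respectively, with t < x₁ < q/t and t < x₂ < q/t. If N^{3/2} ≤ √q / (2(M+2)²·C), then there are no integers α, β with α·β ≠ 0, |α| ≤ C, |β| ≤ C and α·x₁ ≡ β·x₂ (mod q). -/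
/-- The value of the regular continued fraction `[0; c₁, …, c_s]`. -/
def cfVal (l : List ℕ) : ℚ :=
  l.foldr (fun c r => 1 / ((c : ℚ) + r)) 0

/-- `IsCFOf x l` means that `l = [c₁, …, c_s]` is the regular continued fraction
expansion of `x`, i.e. `x = [0; c₁, …, c_s]`, all partial quotients are positive
integers and the last one is at least `2`. -/
def IsCFOf (x : ℚ) (l : List ℕ) : Prop :=
  (∀ c ∈ l, 1 ≤ c) ∧ (∀ h : l ≠ [], 2 ≤ l.getLast h) ∧ cfVal l = x

/-- The continuant `K(c₁, …, c_s)`, i.e. the denominator of `[0; c₁, …, c_s]`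
in lowest terms. -/
def cont : List ℕ → ℕ
  | [] => 1
  | [c] => c
  | c :: d :: l => c * cont (d :: l) + cont l

/-- `ZPred q M t a` expresses `a ∈ Z_M(t)`: writing `a/q` in lowest terms as
`[0; c₁, …, c_s]`, every partial quotient `c_j` whose convergent denominator
`q_j = K(c₁,…,c_j)` satisfies `q_j < t` obeys `c_j ≤ M`. -/
def ZPred (q M : ℕ) (t : ℝ) (a : ℕ) : Prop :=
  ∃ l : List ℕ, IsCFOf ((a : ℚ) / q) l ∧
    ∀ (j : ℕ) (h : j < l.length),
      (cont (l.take (j + 1)) : ℝ) < t → l.get ⟨j, h⟩ ≤ M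

/-- `x` is a denominator of some convergent to `v`. -/
def IsConvDen (v : ℚ) (x : ℕ) : Prop :=
  ∃ (l : List ℕ) (j : ℕ), IsCFOf v l ∧ j ≤ l.length ∧ x = cont (l.take j)

/-!
Let `p = [r₁, …, r_{l-1}]`, `w = K(p)` and `w'` the previous continuant of `p`. Every rational in
`J_{u/v}` has an expansion beginning with `p`, and `xᵢ > t > K(p)`, so the convergent with
denominator `xᵢ` is `p` followed by a nonempty block `Bᵢ`, and `xᵢ = w Aᵢ + w' Aᵢ'` where
`Aᵢ = K(Bᵢ)` and `Aᵢ'` is the continuant of `Bᵢ` without its first entry, a coprime pair.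
Since `t ≤ K(r₁, …, r_l, 1) ≤ (M + 2) w`, the hypothesis on `N` gives `C (x₁ + x₂) < 2Cq/t ≤ w²`,
and `2Cq/t < q`. Hence `αx₁ ≡ βx₂ (mod q)` is an equality of integers; as `w` is coprime to `w'`
and `|βA₂' - αA₁'| < w`, it splits into `α (A₁, A₁') = β (A₂, A₂')`, and two proportional coprime
pairs are equal, so `x₁ = x₂`.
-/

/-- `contPrev [c₁, …, c_s] = K(c₁, …, c_{s-1})` is the denominator `q_{s-1}` of the penultimate
convergent, with the convention `q_{-1} = 0` for the empty list. -/
def contPrev : List ℕ → ℕ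
  | [] => 0
  | [_] => 1
  | c :: d :: l => c * contPrev (d :: l) + contPrev l

theorem cont_append : ∀ (a : List ℕ) {b : List ℕ}, b ≠ [] →
    cont (a ++ b) = cont a * cont b + contPrev a * cont b.tail
  | [], _, _ => by simp [cont, contPrev]
  | [x], b :: l, _ => by simp [cont, contPrev]
  | x :: y :: a, b, hb => by
    change x * cont ((y :: a) ++ b) + cont (a ++ b) = _
    rw [cont_append (y :: a) hb, cont_append a hb]
    simp only [cont, contPrev]
    ring

theorem contPrev_append_singleton : ∀ (a : List ℕ) (c : ℕ), contPrev (a ++ [c]) = cont a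
  | [], _ => rfl
  | [_], _ => by simp [cont, contPrev]
  | x :: y :: a, c => by
    change x * contPrev ((y :: a) ++ [c]) + contPrev (a ++ [c]) = _
    rw [contPrev_append_singleton (y :: a), contPrev_append_singleton a]
    rfl

theorem one_le_cont {l : List ℕ} (hl : ∀ c ∈ l, 1 ≤ c) : 1 ≤ cont l := by
  induction l using cont.induct with
  | case1 => exact le_rfl
  | case2 c => exact hl c (by simp)
  | case3 c d l ih _ =>
    have := ih fun x hx => hl x (List.mem_cons_of_mem _ hx)
    have := hl c (by simp)
    simp only [cont]
    nlinarith

theorem contPrev_le_cont {l : List ℕ} (hl : ∀ c ∈ l, 1 ≤ c) : contPrev l ≤ cont l := by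
  induction l using cont.induct with
  | case1 => exact Nat.zero_le _
  | case2 c => exact hl c (by simp)
  | case3 c d l ih₁ ih₂ =>
    have := ih₁ fun x hx => hl x (List.mem_cons_of_mem _ hx)
    have := ih₂ fun x hx => hl x (by simp [hx])
    simp only [cont, contPrev]
    gcongr

theorem cont_tail_le_cont {l : List ℕ} (hl : ∀ c ∈ l, 1 ≤ c) : cont l.tail ≤ cont l := by
  induction l using cont.induct with
  | case1 => exact le_rfl
  | case2 c => exact hl c (by simp)
  | case3 c d l _ _ =>
    have := hl c (by simp)
    show cont (d :: l) ≤ c * cont (d :: l) + cont l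
    nlinarith

theorem cont_le_cont_of_prefix {a b : List ℕ} (h : a <+: b) (hb : ∀ c ∈ b, 1 ≤ c) :
    cont a ≤ cont b := by
  obtain ⟨s, rfl⟩ := h
  rcases s.eq_nil_or_concat' with rfl | ⟨s', c, rfl⟩
  · simp
  · rw [cont_append a (by simp)]
    have := one_le_cont fun x hx => hb x (List.mem_append_right a hx)
    nlinarith

theorem coprime_cont_tail (l : List ℕ) : Nat.Coprime (cont l) (cont l.tail) := by
  induction l using cont.induct with
  | case1 => exact Nat.coprime_one_left _
  | case2 c => exact Nat.coprime_one_right _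
  | case3 c d l ih _ =>
    show Nat.Coprime (c * cont (d :: l) + cont l) (cont (d :: l))
    rw [mul_comm, Nat.coprime_mul_left_add_left]
    exact ih.symm

theorem coprime_cont_contPrev (l : List ℕ) : Nat.Coprime (cont l) (contPrev l) := by
  induction l using List.reverseRecOn with
  | nil => exact Nat.coprime_one_left _
  | append_singleton l c ih =>
    rw [cont_append l (List.cons_ne_nil c []), contPrev_append_singleton]
    simpa [cont, mul_comm] using ih.symm

theorem cont_append_pair_one_le (p : List ℕ) (g : ℕ) (hp : ∀ c ∈ p, 1 ≤ c) :
    cont (p ++ [g, 1]) ≤ (g + 2) * cont p := by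
  rw [cont_append p (List.cons_ne_nil _ _)]
  have := contPrev_le_cont hp
  simp only [cont, List.tail_cons]
  nlinarith

@[simp] theorem cfVal_nil : cfVal [] = 0 := rfl

@[simp] theorem cfVal_cons (c : ℕ) (l : List ℕ) : cfVal (c :: l) = 1 / ((c : ℚ) + cfVal l) := rfl

theorem isCFOf_cfVal_append {p s : List ℕ} (hp : ∀ c ∈ p, 1 ≤ c) (hs : ∀ c ∈ s, 1 ≤ c)
    (hs' : s ≠ []) (hlast : 2 ≤ s.getLast hs') : IsCFOf (cfVal (p ++ s)) (p ++ s) :=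
  ⟨fun c hc => (List.mem_append.1 hc).elim (hp c) (hs c),
    fun h => (List.getLast_append_of_ne_nil h hs').symm ▸ hlast, rfl⟩

theorem IsCFOf.of_cons {x : ℚ} {c : ℕ} {l : List ℕ} (h : IsCFOf x (c :: l)) :
    IsCFOf (cfVal l) l :=
  ⟨fun d hd => h.1 d (List.mem_cons_of_mem c hd),
    fun hl => (List.getLast_cons hl).symm ▸ h.2.1 (List.cons_ne_nil c l), rfl⟩

theorem IsCFOf.mem_Ioo {x : ℚ} {l : List ℕ} (h : IsCFOf x l) (hl : l ≠ []) :
    x ∈ Set.Ioo 0 1 := by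
  induction l generalizing x with
  | nil => exact absurd rfl hl
  | cons c l ih =>
    have hc : (1 : ℚ) ≤ c := by exact_mod_cast h.1 c (by simp)
    have hy : 0 ≤ cfVal l ∧ 1 < c + cfVal l := by
      rcases eq_or_ne l [] with rfl | hl'
      · have : (2 : ℚ) ≤ c := by exact_mod_cast h.2.1 (List.cons_ne_nil c [])
        simp only [cfVal_nil]
        constructor <;> linarith
      · have := ih h.of_cons hl'
        constructor <;> linarith [this.1, this.2]
    rw [← h.2.2, cfVal_cons]
    exact ⟨one_div_pos.2 (by linarith), (div_lt_one (by linarith)).2 hy.2⟩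

theorem IsCFOf.mem_Ico {x : ℚ} {l : List ℕ} (h : IsCFOf x l) : x ∈ Set.Ico 0 1 := by
  rcases eq_or_ne l [] with rfl | hl
  · simp [← h.2.2]
  · exact Set.Ioo_subset_Ico_self (h.mem_Ioo hl)

theorem mem_uIcc_of_one_div_mem_uIcc {K : Type*} [Field K] [LinearOrder K] [IsStrictOrderedRing K]
    {a b u : K} (ha : 0 < a) (hb : 0 < b) (hu : 0 < u) (h : 1 / u ∈ Set.uIcc (1 / a) (1 / b)) :
    u ∈ Set.uIcc a b := by
  rw [Set.mem_uIcc] at h ⊢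
  rcases h with ⟨h₁, h₂⟩ | ⟨h₁, h₂⟩
  · exact Or.inr ⟨(one_div_le_one_div hu hb).1 h₂, (one_div_le_one_div ha hu).1 h₁⟩
  · exact Or.inl ⟨(one_div_le_one_div hu ha).1 h₂, (one_div_le_one_div hb hu).1 h₁⟩

theorem IsCFOf.prefix_of_mem_uIcc {p s₁ s₂ l : List ℕ} {x : ℚ} (hx : IsCFOf x l)
    (hs₁ : s₁ ≠ []) (hs₂ : s₂ ≠ [])
    (h₁ : IsCFOf (cfVal (p ++ s₁)) (p ++ s₁)) (h₂ : IsCFOf (cfVal (p ++ s₂)) (p ++ s₂))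
    (hmem : x ∈ Set.uIcc (cfVal (p ++ s₁)) (cfVal (p ++ s₂))) : p <+: l := by
  induction p generalizing x l with
  | nil => exact List.nil_prefix
  | cons c p ih =>
    have h₁' : IsCFOf (cfVal (p ++ s₁)) (p ++ s₁) := h₁.of_cons
    have h₂' : IsCFOf (cfVal (p ++ s₂)) (p ++ s₂) := h₂.of_cons
    have hy₁ := h₁'.mem_Ioo (by simp [hs₁])
    have hy₂ := h₂'.mem_Ioo (by simp [hs₂])
    set y₁ := cfVal (p ++ s₁)
    set y₂ := cfVal (p ++ s₂)
    rw [List.cons_append, List.cons_append, cfVal_cons, cfVal_cons] at hmem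
    have hpos₁ : (0 : ℚ) < c + y₁ := by linarith [hy₁.1, (Nat.cast_nonneg c : (0 : ℚ) ≤ c)]
    have hpos₂ : (0 : ℚ) < c + y₂ := by linarith [hy₂.1, (Nat.cast_nonneg c : (0 : ℚ) ≤ c)]
    obtain ⟨c', l', rfl⟩ : ∃ c' l', l = c' :: l' := by
      refine List.exists_cons_of_ne_nil fun hl => ?_
      subst hl
      rw [← hx.2.2, cfVal_nil] at hmem
      rcases Set.mem_uIcc.1 hmem with ⟨h, -⟩ | ⟨h, -⟩
      · exact (one_div_pos.2 hpos₁).not_ge h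
      · exact (one_div_pos.2 hpos₂).not_ge h
    have hz := hx.of_cons.mem_Ico
    set z := cfVal l'
    have hc' : (1 : ℚ) ≤ c' := by exact_mod_cast hx.1 c' (by simp)
    have hbetween : (c' : ℚ) + z ∈ Set.uIcc (c + y₁) (c + y₂) := by
      have hxz : x = 1 / (c' + z) := hx.2.2.symm
      exact mem_uIcc_of_one_div_mem_uIcc hpos₁ hpos₂ (by linarith [hz.1]) (hxz ▸ hmem)
    have hcc : c' = c := by
      have hlo : (c : ℚ) < c' + 1 := by
        rcases Set.mem_uIcc.1 hbetween with ⟨h, -⟩ | ⟨h, -⟩ <;> linarith [hy₁.1, hy₂.1, hz.2]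
      have hhi : (c' : ℚ) < c + 1 := by
        rcases Set.mem_uIcc.1 hbetween with ⟨-, h⟩ | ⟨-, h⟩ <;> linarith [hy₁.2, hy₂.2, hz.1]
      have : c < c' + 1 := by exact_mod_cast hlo
      have : c' < c + 1 := by exact_mod_cast hhi
      omega
    subst hcc
    have hzmem : z ∈ Set.uIcc y₁ y₂ := by
      simpa only [Set.mem_uIcc, add_le_add_iff_left] using hbetween
    exact (List.prefix_cons_inj _).2 (ih hx.of_cons h₁' h₂' hzmem)

theorem exists_eq_append_of_cont_lt {p m l : List ℕ} (hp : p <+: l) (hm : m <+: l)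
    (hl : ∀ c ∈ l, 1 ≤ c) (hlt : cont p < cont m) : ∃ B, B ≠ [] ∧ m = p ++ B := by
  rcases List.prefix_or_prefix_of_prefix hm hp with h | ⟨B, rfl⟩
  · exact absurd (cont_le_cont_of_prefix h fun c hc => hl c (hp.subset hc)) hlt.not_ge
  · refine ⟨B, ?_, rfl⟩
    rintro rfl
    simp at hlt

theorem IsConvDen.exists_eq_cont_mul_add {v : ℚ} {x : ℕ} {p s₁ s₂ : List ℕ}
    (hx : IsConvDen v x) (hs₁ : s₁ ≠ []) (hs₂ : s₂ ≠ [])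
    (h₁ : IsCFOf (cfVal (p ++ s₁)) (p ++ s₁)) (h₂ : IsCFOf (cfVal (p ++ s₂)) (p ++ s₂))
    (hv : v ∈ Set.uIcc (cfVal (p ++ s₁)) (cfVal (p ++ s₂))) (hlt : cont p < x) :
    ∃ B, (∀ c ∈ B, 1 ≤ c) ∧ x = cont p * cont B + contPrev p * cont B.tail := by
  obtain ⟨l, j, hl, -, rfl⟩ := hx
  obtain ⟨B, hB, hlB⟩ := exists_eq_append_of_cont_lt
    (hl.prefix_of_mem_uIcc hs₁ hs₂ h₁ h₂ hv) (List.take_prefix j l) hl.1 hlt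
  refine ⟨B, fun c hc => hl.1 c ((List.take_prefix j l).subset ?_), ?_⟩
  · exact hlB ▸ List.mem_append_right p hc
  · rw [hlB, cont_append p hB]

theorem abs_mul_sub_mul_le {α : Type*} [Ring α] [LinearOrder α] [IsOrderedRing α]
    {a b x y C : α} (ha : |a| ≤ C) (hb : |b| ≤ C) (hx : 0 ≤ x) (hy : 0 ≤ y) :
    |a * x - b * y| ≤ C * (x + y) :=
  calc |a * x - b * y| ≤ |a * x| + |b * y| := abs_sub _ _
    _ = |a| * x + |b| * y := by rw [abs_mul, abs_mul, abs_of_nonneg hx, abs_of_nonneg hy]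
    _ ≤ C * x + C * y := by gcongr
    _ = C * (x + y) := by rw [mul_add]

theorem Nat.Coprime.eq_and_eq_of_mul_eq_mul {a b c d : ℕ} (hab : a.Coprime b) (hcd : c.Coprime d)
    (h : a * d = c * b) : a = c ∧ b = d := by
  have hac : a = c := Nat.dvd_antisymm (hab.dvd_of_dvd_mul_right ⟨d, h.symm⟩)
    (hcd.dvd_of_dvd_mul_right ⟨b, h⟩)
  subst hac
  rcases Nat.eq_zero_or_pos a with rfl | ha
  · rw [Nat.coprime_zero_left] at hab hcd
    exact ⟨rfl, hab.trans hcd.symm⟩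
  · exact ⟨rfl, (Nat.eq_of_mul_eq_mul_left ha h).symm⟩

theorem eq_and_eq_of_mul_eq_of_abs_lt {w w' A₁ A₁' A₂ A₂' : ℕ} {α β : ℤ} (hw : w.Coprime w')
    (h₁ : A₁.Coprime A₁') (h₂ : A₂.Coprime A₂') (hα : α ≠ 0)
    (heq : α * ((w * A₁ + w' * A₁' : ℕ) : ℤ) = β * ((w * A₂ + w' * A₂' : ℕ) : ℤ))
    (hsmall : |β * A₂' - α * A₁'| < w) : A₁ = A₂ ∧ A₁' = A₂' := by
  push_cast at heq
  have hsplit : (w : ℤ) * (α * A₁ - β * A₂) = w' * (β * A₂' - α * A₁') := by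
    linear_combination heq
  have hdvd : (w : ℤ) ∣ β * A₂' - α * A₁' :=
    (Nat.isCoprime_iff_coprime.2 hw).dvd_of_dvd_mul_left ⟨_, hsplit.symm⟩
  have hX := Int.eq_zero_of_abs_lt_dvd hdvd hsmall
  have hw0 : (w : ℤ) ≠ 0 := ((abs_nonneg _).trans_lt hsmall).ne'
  have hY : α * A₁ - β * A₂ = 0 := by
    rw [hX, mul_zero] at hsplit
    exact (mul_eq_zero.1 hsplit).resolve_left hw0
  have hcross : ((A₁ * A₂' : ℕ) : ℤ) = (A₂ * A₁' : ℕ) :=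
    mul_left_cancel₀ hα (by push_cast; linear_combination (A₂' : ℤ) * hY + (A₂ : ℤ) * hX)
  exact h₁.eq_and_eq_of_mul_eq_mul h₂ (by exact_mod_cast hcross)

theorem two_mul_div_le_sq {q N C M w t : ℝ} (hq : 0 < q) (hN : 0 < N) (hC : 0 < C)
    (hM : 0 ≤ M) (ht : t = √(q / N)) (htw : t ≤ (M + 2) * w)
    (hmain : N ^ ((3 : ℝ) / 2) ≤ √q / (2 * (M + 2) ^ 2 * C)) : 2 * C * q / t ≤ w ^ 2 := by
  have ht0 : 0 < t := ht ▸ Real.sqrt_pos.2 (div_pos hq hN)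
  have hq_eq : q = t ^ 2 * N := by
    rw [ht, Real.sq_sqrt (div_pos hq hN).le]; field_simp
  have hsqrt : √q = t * √N := by
    rw [hq_eq, Real.sqrt_mul (sq_nonneg t), Real.sqrt_sq ht0.le]
  have hN32 : N ^ ((3 : ℝ) / 2) = N * √N := by
    rw [show (3 : ℝ) / 2 = 1 + 1 / 2 by norm_num, Real.rpow_add hN, Real.rpow_one,
      Real.sqrt_eq_rpow]
  have hK : 0 < 2 * (M + 2) ^ 2 * C := by positivity
  have hNt : 2 * (M + 2) ^ 2 * C * N ≤ t := by
    rw [hN32, hsqrt, le_div_iff₀ hK] at hmain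
    nlinarith [Real.sqrt_pos.2 hN]
  have hM2 : 0 < (M + 2) ^ 2 := by positivity
  have htw2 : t ^ 2 ≤ (M + 2) ^ 2 * w ^ 2 := by
    rw [← mul_pow]; exact pow_le_pow_left₀ ht0.le htw 2
  rw [hq_eq, div_le_iff₀ ht0, ← mul_le_mul_iff_of_pos_left hM2]
  nlinarith

theorem eq_of_modEq_of_mul_add_lt {q w w' A₁ A₁' A₂ A₂' x₁ x₂ : ℕ} {α β : ℤ} {C : ℝ}
    (hw : w.Coprime w') (h₁ : A₁.Coprime A₁') (h₂ : A₂.Coprime A₂')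
    (hA₁ : A₁' ≤ A₁) (hA₂ : A₂' ≤ A₂)
    (hx₁ : x₁ = w * A₁ + w' * A₁') (hx₂ : x₂ = w * A₂ + w' * A₂')
    (hα0 : α ≠ 0) (hα : |(α : ℝ)| ≤ C) (hβ : |(β : ℝ)| ≤ C)
    (hq : C * (x₁ + x₂) < q) (hw2 : C * (x₁ + x₂) < w ^ 2)
    (hmod : α * x₁ ≡ β * x₂ [ZMOD q]) : x₁ = x₂ := by
  have hC : 0 ≤ C := (abs_nonneg _).trans hα
  have hxeq : α * x₁ = β * x₂ := by
    have := (abs_mul_sub_mul_le hα hβ (Nat.cast_nonneg x₁) (Nat.cast_nonneg x₂)).trans_lt hq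
    exact sub_eq_zero.1 (Int.eq_zero_of_abs_lt_dvd hmod.symm.dvd (by exact_mod_cast this))
  have hsmall : |β * A₂' - α * A₁'| < w := by
    have hA : C * (A₁ + A₂) < w := by
      have hw0 : (0 : ℝ) ≤ w := Nat.cast_nonneg w
      refine lt_of_mul_lt_mul_left ?_ hw0
      calc (w : ℝ) * (C * (A₁ + A₂)) ≤ C * (x₁ + x₂) := by
            rw [hx₁, hx₂]; push_cast
            have : (0 : ℝ) ≤ w' * A₁' + w' * A₂' := by positivity
            nlinarith
        _ < w ^ 2 := hw2
        _ = w * w := sq _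
    have := (abs_mul_sub_mul_le hβ hα (Nat.cast_nonneg A₂') (Nat.cast_nonneg A₁')).trans_lt
      (lt_of_le_of_lt (by gcongr) (add_comm (A₁ : ℝ) A₂ ▸ hA))
    exact_mod_cast this
  obtain ⟨hA, hA'⟩ := eq_and_eq_of_mul_eq_of_abs_lt hw h₁ h₂ hα0 (hx₁ ▸ hx₂ ▸ hxeq) hsmall
  rw [hx₁, hx₂, hA, hA']

theorem critical_denominators_pair_independent_general
    (q M : ℕ) (hq : 0 < q) (N t : ℝ) (hN : 1 ≤ N)
    (ht : t = Real.sqrt ((q : ℝ) / N))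
    (C : ℝ) (hC1 : 1 ≤ C) (hC2 : C < t / 4)
    (r : List ℕ) (hr : r ≠ [])
    (hrpos : ∀ i ∈ r, 1 ≤ i) (hrlast : 2 ≤ r.getLast hr) (hrM : ∀ i ∈ r, i ≤ M)
    (hrden : (cont r : ℝ) < t) (hrden' : t ≤ (cont (r ++ [1]) : ℝ))
    (a₁ a₂ : ℕ)
    (hJ₁ : (a₁ : ℚ) / q ∈ Set.uIcc (cfVal (r.dropLast ++ [M + 1]))
        (cfVal (r.dropLast ++ [r.getLast hr - 1, M + 1])))
    (hJ₂ : (a₂ : ℚ) / q ∈ Set.uIcc (cfVal (r.dropLast ++ [M + 1]))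
        (cfVal (r.dropLast ++ [r.getLast hr - 1, M + 1])))
    (x₁ x₂ : ℕ) (hne : x₁ ≠ x₂)
    (hx₁ : IsConvDen ((a₁ : ℚ) / q) x₁) (hx₂ : IsConvDen ((a₂ : ℚ) / q) x₂)
    (hx₁t : t < x₁) (hx₁q : (x₁ : ℝ) < q / t)
    (hx₂t : t < x₂) (hx₂q : (x₂ : ℝ) < q / t)
    (hmain : N ^ ((3 : ℝ) / 2) ≤ Real.sqrt q / (2 * ((M : ℝ) + 2) ^ 2 * C)) :
    ¬ ∃ α β : ℤ, α * β ≠ 0 ∧ (|α| : ℝ) ≤ C ∧ (|β| : ℝ) ≤ C ∧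
        α * (x₁ : ℤ) ≡ β * (x₂ : ℤ) [ZMOD (q : ℤ)] := by
  rintro ⟨α, β, hαβ, hα, hβ, hmod⟩
  have hC : 0 < C := by linarith
  have ht0 : 0 < t := by linarith
  set p := r.dropLast
  set g := r.getLast hr
  have hp : ∀ c ∈ p, 1 ≤ c := fun c hc => hrpos c ((List.dropLast_prefix r).subset hc)
  have hg : g ≤ M := hrM g (List.getLast_mem hr)
  have hs₁ := isCFOf_cfVal_append (s := [M + 1]) hp (by simp) (by simp) (by simp; omega)
  have hs₂ := isCFOf_cfVal_append (s := [g - 1, M + 1]) hp (by simp; omega) (by simp)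
    (by simp; omega)
  have hpt : (cont p : ℝ) < t :=
    lt_of_le_of_lt (by exact_mod_cast cont_le_cont_of_prefix (List.dropLast_prefix r) hrpos) hrden
  obtain ⟨B₁, hB₁, hx₁e⟩ := hx₁.exists_eq_cont_mul_add (List.cons_ne_nil _ _)
    (List.cons_ne_nil _ _) hs₁ hs₂ hJ₁ (by exact_mod_cast hpt.trans hx₁t)
  obtain ⟨B₂, hB₂, hx₂e⟩ := hx₂.exists_eq_cont_mul_add (List.cons_ne_nil _ _)
    (List.cons_ne_nil _ _) hs₁ hs₂ hJ₂ (by exact_mod_cast hpt.trans hx₂t)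
  have htw : t ≤ ((M : ℝ) + 2) * cont p := by
    have : cont (r ++ [1]) ≤ (M + 2) * cont p := by
      rw [← List.dropLast_append_getLast hr, List.append_assoc]
      exact (cont_append_pair_one_le p g hp).trans (by gcongr)
    exact hrden'.trans (by exact_mod_cast this)
  have hw := two_mul_div_le_sq (by exact_mod_cast hq) (by linarith) hC (Nat.cast_nonneg M) ht
    htw hmain
  have hα' : |(α : ℝ)| ≤ C := by exact_mod_cast hα
  have hβ' : |(β : ℝ)| ≤ C := by exact_mod_cast hβ
  have hsum : C * (x₁ + x₂) < 2 * C * q / t :=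
    calc C * ((x₁ : ℝ) + x₂) < C * (q / t + q / t) := by gcongr
      _ = 2 * C * q / t := by ring
  have hq' : 2 * C * q / t < q := by
    rw [div_lt_iff₀ ht0]
    nlinarith [(Nat.cast_pos.2 hq : (0 : ℝ) < q)]
  exact hne (eq_of_modEq_of_mul_add_lt (coprime_cont_contPrev p) (coprime_cont_tail B₁)
    (coprime_cont_tail B₂) (cont_tail_le_cont hB₁) (cont_tail_le_cont hB₂) hx₁e hx₂e
    (left_ne_zero_of_mul hαβ) hα' hβ' (hsum.trans hq') (hsum.trans_le hw) hmod)

/-- Independence of two critical denominators: if `a₁, a₂ ∈ Z_M(t)` lie in the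
same interval `J_{u/v}`, `u/v = [0;r₁,…,r_l] ∈ Q̄_M(t)`, and `x₁ ≠ x₂` are
denominators of convergents to `a₁/q`, `a₂/q` lying in `(t, q/t)`, then
`αx₁ ≡ βx₂ (mod q)` has no solution with `0 < |α|, |β| ≤ C`, provided
`N^{3/2} ≤ √q/(2(M+2)²C)` where `t = √(q/N)`. -/
theorem critical_denominators_pair_independent
    (q M : ℕ) (hq : 0 < q) (hM : 2 ≤ M) (N t : ℝ) (hN : 1 ≤ N)
    (ht : t = Real.sqrt ((q : ℝ) / N))
    (C : ℝ) (hC1 : 1 ≤ C) (hC2 : C < t / 4)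
    (r : List ℕ) (hr : r ≠ [])
    (hrpos : ∀ i ∈ r, 1 ≤ i) (hrlast : 2 ≤ r.getLast hr) (hrM : ∀ i ∈ r, i ≤ M)
    (hrden : (cont r : ℝ) < t) (hrden' : t ≤ (cont (r ++ [1]) : ℝ))
    (a₁ a₂ : ℕ) (ha₁ : 0 < a₁) (ha₁q : a₁ < q) (ha₂ : 0 < a₂) (ha₂q : a₂ < q)
    (hZ₁ : ZPred q M t a₁) (hZ₂ : ZPred q M t a₂)
    (hJ₁ : (a₁ : ℚ) / q ∈ Set.uIcc (cfVal (r.dropLast ++ [M + 1]))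
        (cfVal (r.dropLast ++ [r.getLast hr - 1, M + 1])))
    (hJ₂ : (a₂ : ℚ) / q ∈ Set.uIcc (cfVal (r.dropLast ++ [M + 1]))
        (cfVal (r.dropLast ++ [r.getLast hr - 1, M + 1])))
    (x₁ x₂ : ℕ) (hne : x₁ ≠ x₂)
    (hx₁ : IsConvDen ((a₁ : ℚ) / q) x₁) (hx₂ : IsConvDen ((a₂ : ℚ) / q) x₂)
    (hx₁t : t < x₁) (hx₁q : (x₁ : ℝ) < q / t)
    (hx₂t : t < x₂) (hx₂q : (x₂ : ℝ) < q / t)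
    (hmain : N ^ ((3 : ℝ) / 2) ≤ Real.sqrt q / (2 * ((M : ℝ) + 2) ^ 2 * C)) :
    ¬ ∃ α β : ℤ, α * β ≠ 0 ∧ (|α| : ℝ) ≤ C ∧ (|β| : ℝ) ≤ C ∧
        α * (x₁ : ℤ) ≡ β * (x₂ : ℤ) [ZMOD (q : ℤ)] :=
  critical_denominators_pair_independent_general q M hq N t hN ht C hC1 hC2 r hr hrpos hrlast hrM
    hrden hrden' a₁ a₂ hJ₁ hJ₂ x₁ x₂ hne hx₁ hx₂ hx₁t hx₁q hx₂t hx₂q hmain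
end

section
/- Let q and k be positive integers, T ≥ 1 a real number, and let x₁,…,x_k be integers with |x_j| ≤ X_j for reals X_j ≥ 1. Assume (8k)^k · X₁⋯X_k ≤ T·q^{k−1}. For each j put R_j = X_j^{−1} · (4k·X₁⋯X_k / T)^{1/(k−1)}, and assume R_j ≥ 1 for all j and R₁⋯R_k ≥ 2. Then there exist integers m₁,…,m_k, not all zero, with |m_j| ≤ 2R_j for all j, such that either m₁x₁ + ⋯ + m_kx_k = 0, or 0 < |m₁x₁ + ⋯ + m_kx_k| ≤ T. -/
open Finset in
/-- Dirichlet-type lemma: given integers `x₁,…,x_k` with `|x_j| ≤ X_j` and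
`(8k)^k·X₁⋯X_k ≤ T·q^{k−1}`, setting `R_j = X_j⁻¹·(4k·X₁⋯X_k/T)^{1/(k−1)}`,
if all `R_j ≥ 1` and `R₁⋯R_k ≥ 2` then there are integers `m_j`, not all zero,
with `|m_j| ≤ 2R_j`, whose combination `∑ m_j x_j` either vanishes or has
absolute value in `(0, T]`. -/
theorem dirichlet_linear_combination
    (q k : ℕ) (hq : 0 < q) (hk : 0 < k) (T : ℝ) (hT : 1 ≤ T)
    (x : Fin k → ℤ) (X : Fin k → ℝ) (hX1 : ∀ j, 1 ≤ X j)
    (hxX : ∀ j, (|x j| : ℝ) ≤ X j)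
    (hsize : (8 * (k : ℝ)) ^ k * ∏ j, X j ≤ T * (q : ℝ) ^ (k - 1))
    (R : Fin k → ℝ)
    (hR : ∀ j, R j = (X j)⁻¹ * ((4 * (k : ℝ) * ∏ i, X i) / T) ^ (1 / ((k : ℝ) - 1)))
    (hR1 : ∀ j, 1 ≤ R j) (hRprod : 2 ≤ ∏ j, R j) :
    ∃ m : Fin k → ℤ, (∃ j, m j ≠ 0) ∧ (∀ j, (|m j| : ℝ) ≤ 2 * R j) ∧
      ((∑ j, m j * x j = 0) ∨
        (0 < |∑ j, m j * x j| ∧ (|∑ j, m j * x j| : ℝ) ≤ T)) := by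
  have hT0 : (0:ℝ) < T := lt_of_lt_of_le one_pos hT
  have hX0 : ∀ j, (0:ℝ) < X j := fun j => lt_of_lt_of_le one_pos (hX1 j)
  have hXprod : (0:ℝ) < ∏ i, X i := Finset.prod_pos (fun j _ => hX0 j)
  -- rule out k = 1
  have hk2 : 2 ≤ k := by
    by_contra h
    push_neg at h
    interval_cases k
    have hRle : ∀ j, R j ≤ 1 := by
      intro j
      have h0 : (1 / (((1:ℕ):ℝ) - 1)) = 0 := by norm_num
      rw [hR j, h0, Real.rpow_zero, mul_one]
      exact inv_le_one_of_one_le₀ (hX1 j)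
    have : ∏ j : Fin 1, R j ≤ 1 :=
      Finset.prod_le_one (fun j _ => le_trans zero_le_one (hR1 j)) (fun j _ => hRle j)
    linarith
  have hkR : ((k:ℝ) - 1) ≠ 0 := by
    have : (2:ℝ) ≤ (k:ℝ) := by exact_mod_cast hk2
    linarith
  set z : ℝ := (4 * (k:ℝ) * ∏ i, X i) / T with hz
  set P : ℝ := z ^ (1 / ((k:ℝ) - 1)) with hPdef
  have hz0 : 0 ≤ z := by
    apply div_nonneg _ hT0.le
    positivity
  have hPz : P ^ (k - 1) = z := by
    have h1 : ((k - 1 : ℕ) : ℝ) = (k:ℝ) - 1 := by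
      rw [Nat.cast_sub hk]; norm_num
    rw [← Real.rpow_natCast P (k-1), h1, hPdef, ← Real.rpow_mul hz0,
      one_div, inv_mul_cancel₀ hkR, Real.rpow_one]
  have hRX : ∀ j, R j * X j = P := by
    intro j
    rw [hR j, inv_mul_eq_div, div_mul_cancel₀ _ (ne_of_gt (hX0 j))]
  have hP1 : 1 ≤ P := by
    have j0 : Fin k := ⟨0, hk⟩
    have := hRX j0
    nlinarith [hR1 j0, hX1 j0]
  have hP0 : 0 < P := lt_of_lt_of_le one_pos hP1
  -- product identity
  have hprodRX : (∏ j, R j) * ∏ j, X j = P ^ k := by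
    rw [← Finset.prod_mul_distrib]
    simp [hRX, Finset.prod_const, Finset.card_univ]
  have hPk : P ^ k = P * z := by
    have hk1 : k - 1 + 1 = k := Nat.succ_pred_eq_of_pos hk
    rw [← hk1, pow_succ, hPz]; ring
  have hprodR : ∏ j, R j = 4 * k * P / T := by
    have h2 : (∏ j, R j) * ∏ j, X j = P * ((4 * (k:ℝ) * ∏ i, X i) / T) := by
      rw [hprodRX, hPk, hz]
    have hXne : (∏ j, X j) ≠ 0 := ne_of_gt hXprod
    have hTne : T ≠ 0 := ne_of_gt hT0
    field_simp at h2 ⊢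
    nlinarith [h2]
  -- pigeonhole setup
  classical
  set D : Finset (Fin k → ℤ) := Fintype.piFinset fun j => Finset.Icc (0:ℤ) ⌊2 * R j⌋ with hD
  set f : (Fin k → ℤ) → ℤ := fun m => ⌊(∑ j, (m j : ℝ) * (x j : ℝ)) / T⌋ with hf
  set C : Finset ℤ := Finset.Icc (⌊-(2 * (k:ℝ) * P) / T⌋) (⌊(2 * (k:ℝ) * P) / T⌋) with hC
  have hmaps : ∀ m ∈ D, f m ∈ C := by
    intro m hm
    rw [hD, Fintype.mem_piFinset] at hm
    have hbound : |∑ j, (m j : ℝ) * (x j : ℝ)| ≤ 2 * (k:ℝ) * P := by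
      calc |∑ j, (m j : ℝ) * (x j : ℝ)| ≤ ∑ j, |(m j : ℝ) * (x j : ℝ)| :=
            Finset.abs_sum_le_sum_abs _ _
        _ ≤ ∑ j, 2 * R j * X j := by
            apply Finset.sum_le_sum
            intro j _
            rw [abs_mul]
            have h1 := (Finset.mem_Icc.mp (hm j)).1
            have h2 := (Finset.mem_Icc.mp (hm j)).2
            have hmj : |(m j : ℝ)| ≤ 2 * R j := by
              rw [abs_of_nonneg (by exact_mod_cast h1 : (0:ℝ) ≤ (m j : ℝ))]
              calc ((m j : ℝ)) ≤ (⌊2 * R j⌋ : ℝ) := by exact_mod_cast h2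
                _ ≤ 2 * R j := Int.floor_le _
            have hxj : |(x j : ℝ)| ≤ X j := by
              have := hxX j; push_cast at this ⊢; exact this
            exact mul_le_mul hmj hxj (abs_nonneg _) (by linarith [hR1 j])
        _ = 2 * (k:ℝ) * P := by
            have : ∀ j : Fin k, 2 * R j * X j = 2 * P := by
              intro j; rw [mul_assoc, hRX j]
            rw [Finset.sum_congr rfl (fun j _ => this j)]
            simp [Finset.sum_const, Finset.card_univ]
            ring
    rw [hC, Finset.mem_Icc]
    constructor
    · exact Int.floor_le_floor ((div_le_div_iff_of_pos_right hT0).mpr (neg_le_of_abs_le hbound))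
    · exact Int.floor_le_floor ((div_le_div_iff_of_pos_right hT0).mpr (le_of_abs_le hbound))
  -- cardinality comparison
  have hCcard : (C.card : ℝ) ≤ (∏ j, R j) + 2 := by
    have hle : ⌊-(2 * (k:ℝ) * P) / T⌋ ≤ ⌊(2 * (k:ℝ) * P) / T⌋ := by
      apply Int.floor_le_floor
      have h0 : (0:ℝ) ≤ (2 * (k:ℝ) * P) / T := by positivity
      have heq : -(2 * (k:ℝ) * P) / T = -((2 * (k:ℝ) * P) / T) := neg_div _ _
      linarith
    have hcard : C.card = (⌊(2 * (k:ℝ) * P) / T⌋ + 1 - ⌊-(2 * (k:ℝ) * P) / T⌋).toNat := by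
      rw [hC, Int.card_Icc]
    have hnn : (0:ℤ) ≤ ⌊(2 * (k:ℝ) * P) / T⌋ + 1 - ⌊-(2 * (k:ℝ) * P) / T⌋ := by omega
    have hcastC : (C.card : ℝ) =
        (⌊(2 * (k:ℝ) * P) / T⌋ : ℝ) + 1 - (⌊-(2 * (k:ℝ) * P) / T⌋ : ℝ) := by
      rw [hcard]
      exact_mod_cast congrArg ((Int.cast : ℤ → ℝ)) (Int.toNat_of_nonneg hnn)
    have h1 : (⌊(2 * (k:ℝ) * P) / T⌋ : ℝ) ≤ (2 * (k:ℝ) * P) / T := Int.floor_le _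
    have h2 : (-(2 * (k:ℝ) * P) / T) - 1 < (⌊-(2 * (k:ℝ) * P) / T⌋ : ℝ) :=
      Int.sub_one_lt_floor _
    have heq : -(2 * (k:ℝ) * P) / T = -((2 * (k:ℝ) * P) / T) := neg_div _ _
    have hhalf : 4 * (k:ℝ) * P / T = 2 * ((2 * (k:ℝ) * P) / T) := by ring
    rw [hcastC, hprodR, hhalf]
    linarith
  have hDcard : (∏ j, R j) + 2 < (D.card : ℝ) := by
    have hcardD : D.card = ∏ j, (⌊2 * R j⌋ + 1).toNat := by
      rw [hD, Fintype.card_piFinset]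
      apply Finset.prod_congr rfl
      intro j _
      rw [Int.card_Icc]
      omega
    have hfl : ∀ j : Fin k, (0:ℤ) ≤ ⌊2 * R j⌋ := by
      intro j
      apply Int.floor_nonneg.mpr
      nlinarith [hR1 j]
    have hcastD : (D.card : ℝ) = ∏ j, ((⌊2 * R j⌋ : ℝ) + 1) := by
      rw [hcardD]
      push_cast
      apply Finset.prod_congr rfl
      intro j _
      have hnnj : (0:ℤ) ≤ ⌊2 * R j⌋ + 1 := by have := hfl j; omega
      exact_mod_cast congrArg ((Int.cast : ℤ → ℝ)) (Int.toNat_of_nonneg hnnj)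
    have hgt : ∏ j, (2 * R j) < ∏ j, ((⌊2 * R j⌋ : ℝ) + 1) := by
      apply Finset.prod_lt_prod
      · intro j _; nlinarith [hR1 j]
      · intro j _; exact le_of_lt (Int.lt_floor_add_one _)
      · exact ⟨⟨0, hk⟩, Finset.mem_univ _, Int.lt_floor_add_one _⟩
    have hsplit : ∏ j, (2 * R j) = 2 ^ k * ∏ j, R j := by
      rw [Finset.prod_mul_distrib, Finset.prod_const, Finset.card_univ]
      simp
    have h2k : (4:ℝ) ≤ 2 ^ k := by
      calc (4:ℝ) = 2 ^ 2 := by norm_num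
        _ ≤ 2 ^ k := pow_le_pow_right₀ one_le_two hk2
    have hRp : (0:ℝ) < ∏ j, R j := by linarith
    have : (∏ j, R j) + 2 ≤ 4 * ∏ j, R j := by nlinarith
    have : (∏ j, R j) + 2 ≤ 2 ^ k * ∏ j, R j := by nlinarith
    rw [hcastD]
    calc (∏ j, R j) + 2 ≤ 2 ^ k * ∏ j, R j := this
      _ = ∏ j, (2 * R j) := hsplit.symm
      _ < _ := hgt
  have hcardlt : C.card < D.card := by
    have : (C.card : ℝ) < (D.card : ℝ) := lt_of_le_of_lt hCcard hDcard
    exact_mod_cast this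
  obtain ⟨a, ha, b, hb, hab, hfab⟩ :=
    Finset.exists_ne_map_eq_of_card_lt_of_maps_to hcardlt hmaps
  refine ⟨a - b, ?_, ?_, ?_⟩
  · rcases Function.ne_iff.mp hab with ⟨j, hj⟩
    exact ⟨j, fun h => hj (by simpa [sub_eq_zero] using h)⟩
  · intro j
    rw [hD, Fintype.mem_piFinset] at ha hb
    have ha1 := (Finset.mem_Icc.mp (ha j)).1
    have ha2 := (Finset.mem_Icc.mp (ha j)).2
    have hb1 := (Finset.mem_Icc.mp (hb j)).1
    have hb2 := (Finset.mem_Icc.mp (hb j)).2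
    have habs : |(a - b) j| ≤ ⌊2 * R j⌋ := by
      simp only [Pi.sub_apply]
      rw [abs_le]
      omega
    calc (|(a - b) j| : ℝ) ≤ (⌊2 * R j⌋ : ℝ) := by exact_mod_cast habs
      _ ≤ 2 * R j := Int.floor_le _
  · -- the sum bound
    have hsum : ((∑ j, (a - b) j * x j : ℤ) : ℝ) =
        (∑ j, (a j : ℝ) * (x j : ℝ)) - ∑ j, (b j : ℝ) * (x j : ℝ) := by
      push_cast
      rw [← Finset.sum_sub_distrib]
      apply Finset.sum_congr rfl
      intro j _
      simp only [Pi.sub_apply]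
      push_cast
      ring
    simp only [hf] at hfab
    clear hmaps hcardlt hCcard hDcard ha hb hab hf hC hD
    clear f C D
    set sa : ℝ := ∑ j, (a j : ℝ) * (x j : ℝ) with hsa
    set sb : ℝ := ∑ j, (b j : ℝ) * (x j : ℝ) with hsb
    have h1 : sa / T < (⌊sb / T⌋ : ℝ) + 1 := by rw [← hfab]; exact Int.lt_floor_add_one _
    have h2 : (⌊sb / T⌋ : ℝ) ≤ sb / T := Int.floor_le _
    have h3 : sb / T < (⌊sa / T⌋ : ℝ) + 1 := by rw [hfab]; exact Int.lt_floor_add_one _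
    have h4 : (⌊sa / T⌋ : ℝ) ≤ sa / T := Int.floor_le _
    have h5 : |sa / T - sb / T| < 1 := by
      rw [abs_lt]
      constructor <;> linarith
    have h7 : |sa - sb| / T < 1 := by
      calc |sa - sb| / T = |(sa - sb) / T| := by
            rw [abs_div, abs_of_pos hT0]
        _ = |sa / T - sb / T| := by rw [sub_div]
        _ < 1 := h5
    have hdiff : |sa - sb| ≤ T := by
      exact le_of_lt ((div_lt_one hT0).mp h7)
    by_cases h0 : (∑ j, (a - b) j * x j : ℤ) = 0
    · exact Or.inl h0
    · refine Or.inr ⟨abs_pos.mpr h0, ?_⟩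
      have hcast : (∑ j, (((a - b) j : ℤ) : ℝ) * ((x j : ℤ) : ℝ)) = sa - sb := by
        rw [hsa, hsb, ← Finset.sum_sub_distrib]
        apply Finset.sum_congr rfl
        intro j _
        simp only [Pi.sub_apply]
        push_cast
        ring
      rw [hcast]
      exact hdiff
end
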